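/- The matroid Δₙ is the transversal matroid of the bipartite graph G on vertex parts S = {x_{ij} : 1 ≤ i ≤ n, 1 ≤ j ≤ 3} and T = {a,b,c} ∪ {v₁,…,vₙ}, where each x_{ij} is adjacent to exactly a, b, c, and vᵢ. -/

import Mathlib

open Finset

/-- The profile of a subset `U` of the ground set `{x_{ij}} = Fin n × Fin 3`:
`profile U i` is the number of `j` with `x_{ij} ∈ U`. -/
def profileOf {n : ℕ} (U : Finset (Fin n × Fin 3)) (i : Fin n) : ℕ :=
  (U.filter (fun p => p.1 = i)).card

/-- A profile is *bad* if, up to permutation of the indices, it equals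
`(3,3,0,…,0)`, `(3,2,2,0,…,0)` or `(2,2,2,2,0,…,0)`. -/
def IsBadProfile {n : ℕ} (c : Fin n → ℕ) : Prop :=
  (∃ i j, i ≠ j ∧ c i = 3 ∧ c j = 3 ∧ ∀ k, k ≠ i → k ≠ j → c k = 0) ∨
  (∃ i j k, i ≠ j ∧ i ≠ k ∧ j ≠ k ∧ c i = 3 ∧ c j = 2 ∧ c k = 2 ∧
    ∀ l, l ≠ i → l ≠ j → l ≠ k → c l = 0) ∨
  (∃ i j k l, i ≠ j ∧ i ≠ k ∧ i ≠ l ∧ j ≠ k ∧ j ≠ l ∧ k ≠ l ∧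
    c i = 2 ∧ c j = 2 ∧ c k = 2 ∧ c l = 2 ∧
    ∀ m, m ≠ i → m ≠ j → m ≠ k → m ≠ l → c m = 0)

/-- `U` is a face of the simplicial complex `Δₙ`: it contains no (minimal)
nonface, i.e. no subset whose profile is bad. -/
def IsFaceD (n : ℕ) (U : Finset (Fin n × Fin 3)) : Prop :=
  ¬ ∃ W : Finset (Fin n × Fin 3), W ⊆ U ∧ IsBadProfile (profileOf W)

/-- `U` is a facet (maximal face) of `Δₙ`. -/
def IsFacetD (n : ℕ) (U : Finset (Fin n × Fin 3)) : Prop :=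
  IsFaceD n U ∧ ∀ W : Finset (Fin n × Fin 3), IsFaceD n W → U ⊆ W → W = U

/-- A profile is a permutation of `(3,2,1,1,…,1)`. -/
def IsProfile321 {n : ℕ} (c : Fin n → ℕ) : Prop :=
  ∃ i j, i ≠ j ∧ c i = 3 ∧ c j = 2 ∧ ∀ k, k ≠ i → k ≠ j → c k = 1

/-- A profile is a permutation of `(2,2,2,1,…,1)`. -/
def IsProfile2221 {n : ℕ} (c : Fin n → ℕ) : Prop :=
  ∃ i j k, i ≠ j ∧ i ≠ k ∧ j ≠ k ∧ c i = 2 ∧ c j = 2 ∧ c k = 2 ∧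
    ∀ l, l ≠ i → l ≠ j → l ≠ k → c l = 1

/-- Adjacency in the bipartite graph `G` on parts `S = {x_{ij}}` and
`T = {a,b,c} ⊔ {v₁,…,vₙ}`: the vertex `x_{ij}` is adjacent exactly to
`a`, `b`, `c` and to `vᵢ`. -/
def AdjG {n : ℕ} (p : Fin n × Fin 3) (t : Fin 3 ⊕ Fin n) : Prop :=
  match t with
  | Sum.inl _ => True
  | Sum.inr i => i = p.1

/-! Writing `cᵢ` for the number of `j` with `x_{ij} ∈ U`, both sides are equivalent to
`∑ᵢ max(cᵢ - 1, 0) ≤ 3`. A matching uses each `vᵢ` at most once, so all but one element of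
every fibre must go to `a, b, c`; conversely, keeping one representative per fibre on `vᵢ`
leaves at most three elements for `a, b, c`. On the other side, each bad profile has
excess `4`, and a profile with entries `≤ 3` and excess `≥ 4` has `2 · #{cᵢ = 3} +
#{cᵢ = 2} ≥ 4`, so restricting it to two `3`s, a `3` and two `2`s, or four `2`s is bad. -/

section

variable {n : ℕ}

/-- Truncated subtraction makes indices with `c i = 0` contribute `0`. -/
def excess (c : Fin n → ℕ) : ℕ :=
  ∑ i, (c i - 1)

lemma profileOf_mono {W U : Finset (Fin n × Fin 3)} (h : W ⊆ U) (i : Fin n) :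
    profileOf W i ≤ profileOf U i :=
  card_le_card (filter_subset_filter _ h)

lemma profileOf_le_three (U : Finset (Fin n × Fin 3)) (i : Fin n) : profileOf U i ≤ 3 := by
  have hsub : U.filter (fun p => p.1 = i) ⊆ {i} ×ˢ univ := fun p hp => by
    simp [(mem_filter.mp hp).2.symm]
  calc profileOf U i ≤ #({i} ×ˢ (univ : Finset (Fin 3))) := card_le_card hsub
    _ = 3 := by simp

lemma profileOf_filter_fst_mem (U : Finset (Fin n × Fin 3)) (s : Finset (Fin n)) :
    profileOf (U.filter (fun p => p.1 ∈ s)) = fun i => if i ∈ s then profileOf U i else 0 := by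
  ext i
  unfold profileOf
  rw [filter_filter]
  split_ifs with hi
  · congr 1
    exact filter_congr fun p _ => ⟨And.right, fun h => ⟨h ▸ hi, h⟩⟩
  · rw [filter_false_of_mem fun p _ ⟨hs, hp⟩ => hi (hp ▸ hs), card_empty]

lemma excess_mono {W U : Finset (Fin n × Fin 3)} (h : W ⊆ U) :
    excess (profileOf W) ≤ excess (profileOf U) :=
  sum_le_sum fun i _ => Nat.sub_le_sub_right (profileOf_mono h i) 1

lemma card_eq_excess_add_card_image_fst (U : Finset (Fin n × Fin 3)) :
    #U = excess (profileOf U) + #(U.image Prod.fst) := by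
  have hzero : ∀ i ∉ U.image Prod.fst, profileOf U i - 1 = 0 := fun i hi => by
    rw [profileOf, filter_false_of_mem fun p hp h => hi (mem_image.mpr ⟨p, hp, h⟩)]
    rfl
  have hpos : ∀ i ∈ U.image Prod.fst, 1 ≤ profileOf U i := fun i hi => by
    obtain ⟨p, hp, rfl⟩ := mem_image.mp hi
    exact card_pos.mpr ⟨p, mem_filter.mpr ⟨hp, rfl⟩⟩
  rw [excess, ← sum_subset (subset_univ _) fun i _ hi => hzero i hi, card_eq_sum_card_image
    Prod.fst U, card_eq_sum_ones (U.image Prod.fst), ← sum_add_distrib]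
  exact sum_congr rfl fun i hi => (Nat.sub_add_cancel (hpos i hi)).symm

lemma four_le_excess_of_isBadProfile {c : Fin n → ℕ} (h : IsBadProfile c) : 4 ≤ excess c := by
  have hsub (s : Finset (Fin n)) : ∑ i ∈ s, (c i - 1) ≤ excess c :=
    sum_le_sum_of_subset (subset_univ s)
  rcases h with ⟨i, j, hij, hi, hj, -⟩ | ⟨i, j, k, hij, hik, hjk, hi, hj, hk, -⟩ |
    ⟨i, j, k, l, hij, hik, hil, hjk, hjl, hkl, hi, hj, hk, hl, -⟩
  · simpa [sum_pair hij, hi, hj] using hsub {i, j}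
  · simpa [sum_insert, sum_pair hjk, hij, hik, hi, hj, hk] using hsub {i, j, k}
  · simpa [sum_insert, sum_pair hkl, hij, hik, hil, hjk, hjl, hi, hj, hk, hl]
      using hsub {i, j, k, l}

lemma excess_eq_of_le_three {c : Fin n → ℕ} (hc : ∀ i, c i ≤ 3) :
    excess c = 2 * #{i | c i = 3} + #{i | c i = 2} := by
  have hterm : ∀ i, c i - 1 = (if c i = 3 then 2 else 0) + (if c i = 2 then 1 else 0) := by
    intro i
    have := hc i
    split_ifs <;> omega
  simp only [excess, hterm, sum_add_distrib, ← sum_filter, sum_const, smul_eq_mul]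
  ring

lemma exists_isBadProfile_restrict {c : Fin n → ℕ} (hc : ∀ i, c i ≤ 3) (h : 4 ≤ excess c) :
    ∃ s : Finset (Fin n), IsBadProfile fun i => if i ∈ s then c i else 0 := by
  rw [excess_eq_of_le_three hc] at h
  by_cases h3 : 2 ≤ #{i | c i = 3}
  · obtain ⟨i, hi, j, hj, hij⟩ := one_lt_card.mp h3
    simp only [mem_filter, mem_univ, true_and] at hi hj
    refine ⟨{i, j}, Or.inl ⟨i, j, hij, by simp [hi], by simp [hj], fun k hki hkj => ?_⟩⟩
    simp [hki, hkj]
  by_cases h32 : 1 ≤ #{i | c i = 3} ∧ 2 ≤ #{i | c i = 2}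
  · obtain ⟨i, hi⟩ := card_pos.mp h32.1
    obtain ⟨j, hj, k, hk, hjk⟩ := one_lt_card.mp h32.2
    simp only [mem_filter, mem_univ, true_and] at hi hj hk
    have hij : i ≠ j := by rintro rfl; omega
    have hik : i ≠ k := by rintro rfl; omega
    refine ⟨{i, j, k}, Or.inr <| Or.inl ⟨i, j, k, hij, hik, hjk, by simp [hi], by simp [hj],
      by simp [hk], fun l hli hlj hlk => ?_⟩⟩
    simp [hli, hlj, hlk]
  · obtain ⟨i, j, k, l, hi, hj, hk, hl, hij, hik, hil, hjk, hjl, hkl⟩ :=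
      three_lt_card_iff.mp (show 3 < #{i | c i = 2} by omega)
    simp only [mem_filter, mem_univ, true_and] at hi hj hk hl
    refine ⟨{i, j, k, l}, Or.inr <| Or.inr ⟨i, j, k, l, hij, hik, hil, hjk, hjl, hkl,
      by simp [hi], by simp [hj], by simp [hk], by simp [hl], fun m hmi hmj hmk hml => ?_⟩⟩
    simp [hmi, hmj, hmk, hml]

lemma isFaceD_iff_excess_le_three (U : Finset (Fin n × Fin 3)) :
    IsFaceD n U ↔ excess (profileOf U) ≤ 3 := by
  constructor
  · intro hU
    by_contra! h
    obtain ⟨s, hs⟩ := exists_isBadProfile_restrict (profileOf_le_three U) h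
    exact hU ⟨U.filter (fun p => p.1 ∈ s), filter_subset _ _,
      by rwa [profileOf_filter_fst_mem]⟩
  · rintro h ⟨W, hWU, hbad⟩
    have := excess_mono hWU
    have := four_le_excess_of_isBadProfile hbad
    omega

lemma card_le_of_injOn_adjG {U : Finset (Fin n × Fin 3)} {f : Fin n × Fin 3 → Fin 3 ⊕ Fin n}
    (hinj : Set.InjOn f U) (hadj : ∀ p ∈ U, AdjG p (f p)) :
    #U ≤ 3 + #(U.image Prod.fst) := by
  let T : Finset (Fin 3 ⊕ Fin n) := univ.map .inl ∪ (U.image Prod.fst).map .inr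
  have hmaps : Set.MapsTo f U T := by
    intro p hp
    have hadj := hadj p hp
    rcases hfp : f p with x | i
    · simp [T]
    · rw [hfp, AdjG] at hadj
      subst hadj
      simpa [T] using ⟨p.2, hp⟩
  calc #U ≤ #T := card_le_card_of_injOn f hmaps hinj
    _ ≤ #(univ.map .inl) + #((U.image Prod.fst).map .inr) := card_union_le _ _
    _ = 3 + #(U.image Prod.fst) := by simp

lemma exists_injOn_adjG_of_injOn_fst_sdiff {U E : Finset (Fin n × Fin 3)} (hE : #E ≤ 3)
    (hinj : Set.InjOn Prod.fst (↑(U \ E) : Set (Fin n × Fin 3))) :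
    ∃ f : Fin n × Fin 3 → Fin 3 ⊕ Fin n, Set.InjOn f ↑U ∧ ∀ p ∈ U, AdjG p (f p) := by
  let g : E → Fin 3 := Fin.castLE hE ∘ E.equivFin
  refine ⟨fun p => if h : p ∈ E then .inl (g ⟨p, h⟩) else .inr p.1, ?_, fun p _ => ?_⟩
  · intro p hp q hq hpq
    by_cases hpE : p ∈ E <;> by_cases hqE : q ∈ E <;>
      simp only [hpE, hqE, dite_true, dite_false, reduceCtorEq, Sum.inl.injEq,
        Sum.inr.injEq] at hpq
    · simpa [g, Fin.castLE_inj] using hpq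
    · exact hinj (by simp [hp, hpE]) (by simp [hq, hqE]) hpq
  · by_cases hpE : p ∈ E <;> simp [hpE, AdjG]

lemma exists_injOn_adjG_iff_excess_le_three (U : Finset (Fin n × Fin 3)) :
    (∃ f : Fin n × Fin 3 → Fin 3 ⊕ Fin n, Set.InjOn f ↑U ∧ ∀ p ∈ U, AdjG p (f p)) ↔
      excess (profileOf U) ≤ 3 := by
  have hcard := card_eq_excess_add_card_image_fst U
  constructor
  · rintro ⟨f, hinj, hadj⟩
    have := card_le_of_injOn_adjG hinj hadj
    omega
  · intro h
    obtain ⟨R, hRU, hRinj, hRimg⟩ := exists_subset_injOn_image_eq_of_surjOn (U : Set _)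
      (U.image Prod.fst) (by rw [coe_image]; exact Set.surjOn_image _ _)
    rw [coe_subset] at hRU
    refine exists_injOn_adjG_of_injOn_fst_sdiff (E := U \ R) ?_
      (by rwa [Finset.sdiff_sdiff_eq_self hRU])
    have hRcard : #R = #(U.image Prod.fst) := hRimg ▸ (card_image_of_injOn hRinj).symm
    rw [card_sdiff_of_subset hRU]
    omega

end

theorem Delta_n_transversal_general (n : ℕ) (U : Finset (Fin n × Fin 3)) :
    IsFaceD n U ↔
      ∃ f : Fin n × Fin 3 → Fin 3 ⊕ Fin n,
        Set.InjOn f ↑U ∧ ∀ p ∈ U, AdjG p (f p) := by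
  rw [isFaceD_iff_excess_le_three, exists_injOn_adjG_iff_excess_le_three]

/-- `Δₙ` is the transversal matroid `M[G,S]` of the bipartite graph `G`:
a subset `U` of `S` is a face of `Δₙ` iff `U` can be saturated by a matching
of `G`, i.e. there is an injective choice `f` of neighbours on `U`. -/
theorem Delta_n_transversal (n : ℕ) (hn : 4 ≤ n) (U : Finset (Fin n × Fin 3)) :
    IsFaceD n U ↔
      ∃ f : Fin n × Fin 3 → Fin 3 ⊕ Fin n,
        Set.InjOn f ↑U ∧ ∀ p ∈ U, AdjG p (f p) :=
  Delta_n_transversal_general n U
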